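/- (Corollary 1) The matrix exponential, restricted to the tangent space symsl of real 3×3 symmetric traceless matrices, is a bijection onto the manifold SymSL₊ of real 3×3 symmetric positive definite matrices with determinant 1. -/

import Mathlib

/-! On self-adjoint matrices the exponential and the logarithm of the continuous functional
calculus are mutually inverse, and they exchange self-adjoint and positive definite matrices.
Diagonalising, `det (exp X) = exp (tr X)` and `tr (log U) = log (det U)`, so the traceless
condition on one side corresponds exactly to the unit determinant on the other. -/

open Matrix

/-- `symsl`: the tangent space of real 3×3 symmetric traceless matrices. -/
def symsl : Set (Matrix (Fin 3) (Fin 3) ℝ) :=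
  {X | Xᵀ = X ∧ X.trace = 0}

/-- `SymSL₊`: the manifold of real 3×3 symmetric positive definite matrices with
determinant 1. -/
def SymSLpos : Set (Matrix (Fin 3) (Fin 3) ℝ) :=
  {U | Uᵀ = U ∧ U.det = 1 ∧ ∀ x : Fin 3 → ℝ, x ≠ 0 → 0 < x ⬝ᵥ U *ᵥ x}

open scoped Matrix.Norms.L2Operator MatrixOrder

lemma IsSelfAdjoint.isStrictlyPositive_exp {A : Type*} [NormedRing A] [StarRing A]
    [NormedAlgebra ℝ A] [ContinuousFunctionalCalculus ℝ A IsSelfAdjoint] [PartialOrder A]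
    [StarOrderedRing A] [NonnegSpectrumClass ℝ A] {a : A} (ha : IsSelfAdjoint a) :
    IsStrictlyPositive (NormedSpace.exp a) := by
  rw [← CFC.real_exp_eq_normedSpace_exp]
  exact (cfc_isStrictlyPositive_iff Real.exp a).mpr fun x _ => Real.exp_pos x

namespace Matrix

variable {n 𝕜 : Type*} [Fintype n] [DecidableEq n] [RCLike 𝕜]

lemma IsHermitian.det_cfc {A : Matrix n n 𝕜} (hA : A.IsHermitian) (f : ℝ → ℝ) :
    (cfc f A).det = ∏ i, (f (hA.eigenvalues i) : 𝕜) := by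
  simp [hA.cfc_eq, IsHermitian.cfc, -Unitary.conjStarAlgAut_apply]

lemma IsHermitian.trace_cfc {A : Matrix n n 𝕜} (hA : A.IsHermitian) (f : ℝ → ℝ) :
    (cfc f A).trace = ∑ i, (f (hA.eigenvalues i) : 𝕜) := by
  simp [hA.cfc_eq, IsHermitian.cfc, -Unitary.conjStarAlgAut_apply]

lemma IsHermitian.det_exp {A : Matrix n n ℝ} (hA : A.IsHermitian) :
    (NormedSpace.exp A).det = Real.exp A.trace := by
  rw [← CFC.real_exp_eq_normedSpace_exp hA.isSelfAdjoint, hA.det_cfc, hA.trace_eq_sum_eigenvalues,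
    Real.exp_sum]
  rfl

lemma PosDef.trace_log {A : Matrix n n ℝ} (hA : A.PosDef) :
    (CFC.log A).trace = Real.log A.det := by
  rw [CFC.log, hA.isHermitian.trace_cfc, hA.isHermitian.det_eq_prod_eigenvalues]
  exact (Real.log_prod fun i _ => (hA.eigenvalues_pos i).ne').symm

end Matrix

lemma mem_symsl_iff {X : Matrix (Fin 3) (Fin 3) ℝ} :
    X ∈ symsl ↔ X.IsHermitian ∧ X.trace = 0 := by
  rw [isHermitian_iff_isSymm]; rfl

lemma mem_SymSLpos_iff {U : Matrix (Fin 3) (Fin 3) ℝ} :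
    U ∈ SymSLpos ↔ U.PosDef ∧ U.det = 1 := by
  simp only [SymSLpos, Set.mem_ofPred_eq, IsSymm, posDef_iff_dotProduct_mulVec,
    isHermitian_iff_isSymm, star_trivial]
  tauto

lemma mapsTo_exp_symsl : Set.MapsTo NormedSpace.exp symsl SymSLpos := fun X hX => by
  obtain ⟨hherm, htrace⟩ := mem_symsl_iff.1 hX
  exact mem_SymSLpos_iff.2 ⟨hherm.isSelfAdjoint.isStrictlyPositive_exp.posDef,
    by rw [hherm.det_exp, htrace, Real.exp_zero]⟩

lemma mapsTo_log_SymSLpos : Set.MapsTo CFC.log SymSLpos symsl := fun U hU => by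
  obtain ⟨hpos, hdet⟩ := mem_SymSLpos_iff.1 hU
  exact mem_symsl_iff.2 ⟨IsSelfAdjoint.log, by rw [hpos.trace_log, hdet, Real.log_one]⟩

/-- (Corollary 1) The matrix exponential, restricted to the tangent space `symsl` of real 3×3
symmetric traceless matrices, is a bijection onto the manifold `SymSL₊` of real 3×3 symmetric
positive definite matrices with determinant 1. -/
theorem exp_bijOn_symsl_SymSLpos :
    Set.BijOn (fun X : Matrix (Fin 3) (Fin 3) ℝ => NormedSpace.exp X) symsl SymSLpos :=
  Set.InvOn.bijOn
    ⟨fun X hX => CFC.log_exp X (mem_symsl_iff.1 hX).1,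
      fun U hU => CFC.exp_log U (mem_SymSLpos_iff.1 hU).1.isStrictlyPositive⟩
    mapsTo_exp_symsl mapsTo_log_SymSLpos
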